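/- Let d ∈ {1,2,3,7,11} and let x = [a₁,…,a_n] be a continued fraction expansion with a_ℓ ∈ ℤ[ω_d] and |a_ℓ| ≥ 4.17209 for every ℓ ∈ {1,…,n}. Then this expansion is geodesic: the walk ∞ → 0 = p₀/q₀ → p₁/q₁ → ⋯ → p_n/q_n = x along its convergents is a geodesic path in the Farey graph E_d from ∞ to x. -/

import Mathlib

/-!
For a point `r/s` write `ν_k = q_{k-1} r - p_{k-1} s` (`cfCross`), its determinant against the
`k`-th vertex of the convergent walk; for coprime representatives it is well defined up to a unit,
which has norm one because nonzero elements of `ℤ[ω_d]` have norm at least one.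
The recursion `ν_{k+2} = a_{k+1} ν_{k+1} + ν_k` shows that for the endpoint `x` itself the norms
`|ν_0| > |ν_1| > ⋯ > |ν_{n+1}| = 0` decrease strictly. On the other hand, a vertex reached from
`∞` in `k` steps satisfies `|ν_k| ≤ |ν_{k+1}|`: this holds at `∞`, where `ν_0 = 0`, and it
propagates along Farey edges, since a strict descent `|ν'_{k+2}| < |ν'_{k+1}|` at the next vertex
forces `|ν'_k| > (|a_{k+1}| - 1) |ν'_{k+1}| ≥ 2 |ν'_{k+1}|`, which makes the determinant
`ν_k ν'_{k+1} - ν_{k+1} ν'_k` exceed one in norm, whereas it equals the determinant of the two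
neighbours. Hence every walk from `∞` to `x` has at least `n + 1` edges.
-/

/-- `ω_d`: the generator of the ring of integers of `ℚ(√(-d))`. -/
noncomputable def omegaD (d : ℕ) : ℂ :=
  if d % 4 = 3 then (1 + Complex.I * Real.sqrt d) / 2 else Complex.I * Real.sqrt d

/-- The ring of integers `ℤ[ω_d]` of `ℚ(√(-d))`, as a subset of `ℂ`. -/
def ringInt (d : ℕ) : Set ℂ := {z | ∃ a b : ℤ, z = (a : ℂ) + (b : ℂ) * omegaD d}

/-- `p` and `q` are coprime in `ℤ[ω_d]`. -/
def CoprimeIn (d : ℕ) (p q : ℂ) : Prop :=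
  ∃ u v : ℂ, u ∈ ringInt d ∧ v ∈ ringInt d ∧ u * p + v * q = 1

/-- `x` is an element of the field `ℚ(√(-d)) ⊆ ℂ`. -/
def inK (d : ℕ) (x : ℂ) : Prop :=
  ∃ p q : ℂ, p ∈ ringInt d ∧ q ∈ ringInt d ∧ q ≠ 0 ∧ x = p / q

/-- The point `p/q` of `ℂ ∪ {∞}`, with `p/0 = ∞`. -/
noncomputable def divC (p q : ℂ) : OnePoint ℂ :=
  if q = 0 then OnePoint.infty else ((p / q : ℂ) : OnePoint ℂ)

/-- Two points of `ℚ(√(-d)) ∪ {∞}` are Farey neighbours (joined by an edge of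
the Farey graph `E_d`) if they have coprime representations `p₁/q₁`, `p₂/q₂`
with `|p₁q₂ − p₂q₁| = 1`. -/
def FareyAdj (d : ℕ) (x y : OnePoint ℂ) : Prop :=
  ∃ p₁ q₁ p₂ q₂ : ℂ, p₁ ∈ ringInt d ∧ q₁ ∈ ringInt d ∧ p₂ ∈ ringInt d ∧ q₂ ∈ ringInt d ∧
    CoprimeIn d p₁ q₁ ∧ CoprimeIn d p₂ q₂ ∧ x = divC p₁ q₁ ∧ y = divC p₂ q₂ ∧
    ‖p₁ * q₂ - p₂ * q₁‖ = 1

/-- `f 0 → f 1 → ⋯ → f n` is a walk (of length `n`) in the Farey graph `E_d`. -/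
def IsWalk (d n : ℕ) (f : ℕ → OnePoint ℂ) : Prop := ∀ k, k < n → FareyAdj d (f k) (f (k + 1))

/-- `f 0 → ⋯ → f n` is a geodesic path in `E_d`: a walk of minimal length
among all walks with the same endpoints. -/
def IsGeodesicWalk (d n : ℕ) (f : ℕ → OnePoint ℂ) : Prop :=
  IsWalk d n f ∧ ∀ (m : ℕ) (g : ℕ → OnePoint ℂ), IsWalk d m g → g 0 = f 0 → g m = f n → n ≤ m

/-- Numerators of the convergents of `[a₁, a₂, …]` (`a 0` is unused):
`p₀ = 0`, `p₁ = 1`, `p_k = a_k p_{k−1} + p_{k−2}`. -/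
noncomputable def cfP (a : ℕ → ℂ) : ℕ → ℂ
  | 0 => 0
  | 1 => 1
  | (k + 2) => a (k + 2) * cfP a (k + 1) + cfP a k

/-- Denominators of the convergents of `[a₁, a₂, …]`:
`q₀ = 1`, `q₁ = a₁`, `q_k = a_k q_{k−1} + q_{k−2}`. -/
noncomputable def cfQ (a : ℕ → ℂ) : ℕ → ℂ
  | 0 => 1
  | 1 => a 1
  | (k + 2) => a (k + 2) * cfQ a (k + 1) + cfQ a k

/-- The walk `∞ → p₀/q₀ = 0 → p₁/q₁ → ⋯` along the convergents of `[a₁, a₂, …]`. -/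
noncomputable def cfWalk (a : ℕ → ℂ) : ℕ → OnePoint ℂ :=
  fun k => if k = 0 then OnePoint.infty else divC (cfP a (k - 1)) (cfQ a (k - 1))

lemma sub_one_mul_norm_lt_of_eq_mul_add {R : Type*} [NormedDivisionRing R] {c x y z : R}
    (h : z = c * y + x) (hzy : ‖z‖ < ‖y‖) : (‖c‖ - 1) * ‖y‖ < ‖x‖ := by
  have hcy : ‖c * y‖ ≤ ‖z‖ + ‖x‖ := by
    rw [← sub_eq_of_eq_add h]
    exact norm_sub_le z x
  rw [norm_mul] at hcy
  linarith

lemma one_lt_norm_mul_sub_mul {R : Type*} [NormedDivisionRing R] {A B C D : R}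
    (hB : 1 ≤ ‖B‖) (hD : 1 ≤ ‖D‖) (hAB : ‖A‖ ≤ ‖B‖) (hDC : 2 * ‖D‖ < ‖C‖) :
    1 < ‖A * D - B * C‖ := by
  have h := norm_sub_norm_le (B * C) (A * D)
  rw [norm_sub_rev, norm_mul, norm_mul] at h
  nlinarith [mul_le_mul_of_nonneg_right hAB (norm_nonneg D),
    mul_lt_mul_of_pos_left hDC (by linarith : 0 < ‖B‖)]

lemma omegaD_sq (d : ℕ) : ∃ t N : ℤ, omegaD d ^ 2 = t * omegaD d - N := by
  have hs : ((Real.sqrt d : ℝ) : ℂ) ^ 2 = d := by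
    rw [← Complex.ofReal_pow, Real.sq_sqrt d.cast_nonneg, Complex.ofReal_natCast]
  by_cases h : d % 4 = 3
  · refine ⟨1, d / 4 + 1, ?_⟩
    have hd : (d : ℂ) = 4 * (((d : ℤ) / 4 : ℤ) : ℂ) + 3 := by
      exact_mod_cast (by omega : (d : ℤ) = 4 * (d / 4) + 3)
    simp only [omegaD, if_pos h]
    push_cast
    linear_combination (((Real.sqrt d : ℝ) : ℂ) ^ 2 / 4) * Complex.I_sq - hs / 4 - hd / 4
  · refine ⟨0, d, ?_⟩
    simp only [omegaD, if_neg h]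
    push_cast
    linear_combination (((Real.sqrt d : ℝ) : ℂ) ^ 2) * Complex.I_sq - hs

def ringIntSubring (d : ℕ) : Subring ℂ where
  carrier := ringInt d
  mul_mem' := by
    rintro _ _ ⟨a, b, rfl⟩ ⟨a', b', rfl⟩
    obtain ⟨t, N, hω⟩ := omegaD_sq d
    refine ⟨a * a' - b * b' * N, a * b' + a' * b + b * b' * t, ?_⟩
    push_cast
    linear_combination ((b : ℂ) * b') * hω
  one_mem' := ⟨1, 0, by simp⟩
  add_mem' := by
    rintro _ _ ⟨a, b, rfl⟩ ⟨a', b', rfl⟩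
    exact ⟨a + a', b + b', by push_cast; ring⟩
  zero_mem' := ⟨0, 0, by simp⟩
  neg_mem' := by
    rintro _ ⟨a, b, rfl⟩
    exact ⟨-a, -b, by push_cast; ring⟩

lemma one_le_sq_intCast {b : ℤ} (hb : b ≠ 0) : (1 : ℝ) ≤ (b : ℝ) ^ 2 := by
  exact_mod_cast (one_le_sq_iff_one_le_abs b).mpr (Int.one_le_abs hb)

lemma one_le_norm_of_mem_ringInt {d : ℕ} {z : ℂ} (hz : z ∈ ringInt d) (h0 : z ≠ 0) :
    1 ≤ ‖z‖ := by
  obtain ⟨a, b, rfl⟩ := hz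
  have hsq := Real.sq_sqrt d.cast_nonneg
  suffices 1 ≤ Complex.normSq (a + b * omegaD d) by
    rw [Complex.normSq_eq_norm_sq] at this
    nlinarith [norm_nonneg ((a : ℂ) + b * omegaD d)]
  by_cases h : d % 4 = 3
  · have hz : (a : ℂ) + b * omegaD d =
        ((a + b / 2 : ℝ) : ℂ) + ((b * √d / 2 : ℝ) : ℂ) * Complex.I := by
      simp only [omegaD, if_pos h]; push_cast; ring
    have hab : a ≠ 0 ∨ b ≠ 0 := by
      by_contra! hab
      simp [hab] at h0
    have hN : 1 ≤ a ^ 2 + a * b + b ^ 2 := by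
      have : 0 < a ^ 2 + b ^ 2 := by rcases hab with hab | hab <;> positivity
      nlinarith [sq_nonneg (a + b)]
    have hN' : (1 : ℝ) ≤ a ^ 2 + a * b + b ^ 2 := by exact_mod_cast hN
    have hd : (3 : ℝ) ≤ d := by exact_mod_cast (by omega : 3 ≤ d)
    rw [hz, Complex.normSq_add_mul_I]
    nlinarith [sq_nonneg (b : ℝ)]
  · have hz : (a : ℂ) + b * omegaD d = ((a : ℝ) : ℂ) + ((b * √d : ℝ) : ℂ) * Complex.I := by
      simp only [omegaD, if_neg h]; push_cast; ring
    rw [hz, Complex.normSq_add_mul_I, mul_pow, hsq]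
    rcases eq_or_ne a 0 with rfl | ha
    · have hb : b ≠ 0 := by rintro rfl; simp at h0
      have hd : (1 : ℝ) ≤ d := by
        have : d ≠ 0 := by rintro rfl; simp [omegaD] at h0
        exact_mod_cast Nat.one_le_iff_ne_zero.mpr this
      nlinarith [one_le_sq_intCast hb]
    · nlinarith [one_le_sq_intCast ha, sq_nonneg (b : ℝ)]

lemma mul_eq_mul_of_divC_eq {r s r' s' : ℂ} (h : divC r s = divC r' s') : r * s' = r' * s := by
  unfold divC at h
  split_ifs at h with hs hs' hs'
  · simp [hs, hs']
  · exact absurd h.symm (OnePoint.coe_ne_infty _)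
  · exact absurd h (OnePoint.coe_ne_infty _)
  · exact (div_eq_div_iff hs hs').mp (OnePoint.coe_injective h)

lemma exists_mem_ringInt_eq_mul_of_coprimeIn {d : ℕ} {r s r' s' : ℂ} (hcop : CoprimeIn d r s)
    (hr' : r' ∈ ringInt d) (hs' : s' ∈ ringInt d) (h : r * s' = r' * s) :
    ∃ ε ∈ ringInt d, r' = ε * r ∧ s' = ε * s := by
  obtain ⟨u, v, hu, hv, huv⟩ := hcop
  let R := ringIntSubring d
  refine ⟨u * r' + v * s', R.add_mem (R.mul_mem hu hr') (R.mul_mem hv hs'), ?_, ?_⟩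
  · linear_combination (-r') * huv - v * h
  · linear_combination (-s') * huv + u * h

lemma exists_norm_eq_one_of_divC_eq {d : ℕ} {r s r' s' : ℂ}
    (hr : r ∈ ringInt d) (hs : s ∈ ringInt d) (hcop : CoprimeIn d r s)
    (hr' : r' ∈ ringInt d) (hs' : s' ∈ ringInt d) (hcop' : CoprimeIn d r' s')
    (h : divC r s = divC r' s') : ∃ ε : ℂ, ‖ε‖ = 1 ∧ r' = ε * r ∧ s' = ε * s := by
  have hcross := mul_eq_mul_of_divC_eq h
  obtain ⟨ε, hε, hr'ε, hs'ε⟩ := exists_mem_ringInt_eq_mul_of_coprimeIn hcop hr' hs' hcross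
  obtain ⟨ε', hε', hrε', hsε'⟩ :=
    exists_mem_ringInt_eq_mul_of_coprimeIn hcop' hr hs (by linear_combination -hcross)
  obtain ⟨u, v, -, -, huv⟩ := hcop
  have hunit : ε' * ε = 1 := by
    linear_combination u * (by rw [mul_assoc, ← hr'ε, ← hrε'] : ε' * ε * r = r) +
      v * (by rw [mul_assoc, ← hs'ε, ← hsε'] : ε' * ε * s = s) - (ε' * ε - 1) * huv
  have hnorm : ‖ε'‖ * ‖ε‖ = 1 := by rw [← norm_mul, hunit, norm_one]
  have h₁ := one_le_norm_of_mem_ringInt hε (right_ne_zero_of_mul_eq_one hunit)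
  have h₂ := one_le_norm_of_mem_ringInt hε' (left_ne_zero_of_mul_eq_one hunit)
  exact ⟨ε, by nlinarith, hr'ε, hs'ε⟩

noncomputable def cfWalkNum (a : ℕ → ℂ) : ℕ → ℂ
  | 0 => 1
  | k + 1 => cfP a k

noncomputable def cfWalkDen (a : ℕ → ℂ) : ℕ → ℂ
  | 0 => 0
  | k + 1 => cfQ a k

noncomputable def cfCross (a : ℕ → ℂ) (r s : ℂ) (k : ℕ) : ℂ :=
  cfWalkDen a k * r - cfWalkNum a k * s

section Convergents

variable (a : ℕ → ℂ)

lemma cfWalk_eq_divC (k : ℕ) : cfWalk a k = divC (cfWalkNum a k) (cfWalkDen a k) := by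
  cases k with
  | zero => simp [cfWalk, cfWalkDen, divC]
  | succ k => simp [cfWalk, cfWalkNum, cfWalkDen]

lemma cfWalkNum_add_two (k : ℕ) :
    cfWalkNum a (k + 2) = a (k + 1) * cfWalkNum a (k + 1) + cfWalkNum a k := by
  cases k <;> simp [cfWalkNum, cfP]

lemma cfWalkDen_add_two (k : ℕ) :
    cfWalkDen a (k + 2) = a (k + 1) * cfWalkDen a (k + 1) + cfWalkDen a k := by
  cases k <;> simp [cfWalkDen, cfQ]

lemma cfWalkNum_mul_cfWalkDen_sub (k : ℕ) :
    cfWalkNum a (k + 1) * cfWalkDen a k - cfWalkNum a k * cfWalkDen a (k + 1) =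
      (-1) ^ (k + 1) := by
  induction k with
  | zero => simp [cfWalkNum, cfWalkDen, cfP, cfQ]
  | succ k ih =>
    rw [cfWalkNum_add_two, cfWalkDen_add_two, pow_succ]
    linear_combination -ih

lemma cfCross_add_two (r s : ℂ) (k : ℕ) :
    cfCross a r s (k + 2) = a (k + 1) * cfCross a r s (k + 1) + cfCross a r s k := by
  simp only [cfCross, cfWalkNum_add_two, cfWalkDen_add_two]
  ring

lemma norm_cfCross_mul_sub (p₁ q₁ p₂ q₂ : ℂ) (k : ℕ) :
    ‖cfCross a p₁ q₁ k * cfCross a p₂ q₂ (k + 1) - cfCross a p₁ q₁ (k + 1) * cfCross a p₂ q₂ k‖ =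
      ‖p₁ * q₂ - p₂ * q₁‖ := by
  have h : cfCross a p₁ q₁ k * cfCross a p₂ q₂ (k + 1) -
      cfCross a p₁ q₁ (k + 1) * cfCross a p₂ q₂ k = -(-1) ^ (k + 1) * (p₁ * q₂ - p₂ * q₁) := by
    simp only [cfCross]
    linear_combination (q₁ * p₂ - p₁ * q₂) * cfWalkNum_mul_cfWalkDen_sub a k
  rw [h, norm_mul, norm_neg, norm_pow, norm_neg, norm_one, one_pow, one_mul]

end Convergents

def AscentAt (a : ℕ → ℂ) (n : ℕ) (r s : ℂ) (k : ℕ) : Prop :=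
  k ≤ n → ‖cfCross a r s k‖ ≤ ‖cfCross a r s (k + 1)‖

section LargeDigits

variable {d n : ℕ} {a : ℕ → ℂ}

lemma cfWalkNum_mem_and_cfWalkDen_mem (hmem : ∀ k, 1 ≤ k → k ≤ n → a k ∈ ringInt d) {k : ℕ}
    (hk : k ≤ n + 1) : cfWalkNum a k ∈ ringInt d ∧ cfWalkDen a k ∈ ringInt d := by
  let R := ringIntSubring d
  suffices h : ∀ k ≤ n, (cfWalkNum a k ∈ R ∧ cfWalkDen a k ∈ R) ∧
      (cfWalkNum a (k + 1) ∈ R ∧ cfWalkDen a (k + 1) ∈ R) by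
    rcases k with _ | k
    · exact (h 0 (Nat.zero_le n)).1
    · exact (h k (by omega)).2
  intro k hk
  induction k with
  | zero => exact ⟨⟨R.one_mem, R.zero_mem⟩, ⟨R.zero_mem, R.one_mem⟩⟩
  | succ k ih =>
    obtain ⟨⟨hN₀, hD₀⟩, hN₁, hD₁⟩ := ih (by omega)
    have ha : a (k + 1) ∈ R := hmem (k + 1) (by omega) hk
    rw [cfWalkNum_add_two, cfWalkDen_add_two]
    exact ⟨⟨hN₁, hD₁⟩, R.add_mem (R.mul_mem ha hN₁) hN₀, R.add_mem (R.mul_mem ha hD₁) hD₀⟩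

lemma coprimeIn_cfWalkNum_cfWalkDen (hmem : ∀ k, 1 ≤ k → k ≤ n → a k ∈ ringInt d) {k : ℕ}
    (hk : k ≤ n + 1) : CoprimeIn d (cfWalkNum a k) (cfWalkDen a k) := by
  let R := ringIntSubring d
  rcases k with _ | k
  · exact ⟨1, 0, R.one_mem, R.zero_mem, by simp [cfWalkNum, cfWalkDen]⟩
  · obtain ⟨hN, hD⟩ := cfWalkNum_mem_and_cfWalkDen_mem hmem (k := k) (by omega)
    have hσ : (-1 : ℂ) ^ (k + 1) ∈ R := R.pow_mem (R.neg_mem R.one_mem) _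
    refine ⟨(-1) ^ (k + 1) * cfWalkDen a k, -((-1) ^ (k + 1) * cfWalkNum a k),
      R.mul_mem hσ hD, R.neg_mem (R.mul_mem hσ hN), ?_⟩
    have hσ2 : ((-1 : ℂ) ^ (k + 1)) ^ 2 = 1 := by rw [← pow_mul, mul_comm, pow_mul]; norm_num
    linear_combination (-1 : ℂ) ^ (k + 1) * cfWalkNum_mul_cfWalkDen_sub a k + hσ2

lemma isWalk_cfWalk (hmem : ∀ k, 1 ≤ k → k ≤ n → a k ∈ ringInt d) :
    IsWalk d (n + 1) (cfWalk a) := by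
  intro k hk
  obtain ⟨hN₀, hD₀⟩ := cfWalkNum_mem_and_cfWalkDen_mem hmem (k := k) (by omega)
  obtain ⟨hN₁, hD₁⟩ := cfWalkNum_mem_and_cfWalkDen_mem hmem (k := k + 1) (by omega)
  refine ⟨_, _, _, _, hN₀, hD₀, hN₁, hD₁, coprimeIn_cfWalkNum_cfWalkDen hmem (by omega),
    coprimeIn_cfWalkNum_cfWalkDen hmem (by omega), cfWalk_eq_divC a k, cfWalk_eq_divC a (k + 1), ?_⟩
  rw [← norm_neg, neg_sub, cfWalkNum_mul_cfWalkDen_sub, norm_pow, norm_neg, norm_one, one_pow]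

lemma cfCross_mem (hmem : ∀ k, 1 ≤ k → k ≤ n → a k ∈ ringInt d) {r s : ℂ} (hr : r ∈ ringInt d)
    (hs : s ∈ ringInt d) {k : ℕ} (hk : k ≤ n + 1) : cfCross a r s k ∈ ringInt d := by
  let R := ringIntSubring d
  obtain ⟨hN, hD⟩ := cfWalkNum_mem_and_cfWalkDen_mem hmem hk
  exact R.sub_mem (R.mul_mem hD hr) (R.mul_mem hN hs)

lemma AscentAt.of_divC_eq {r s r' s' : ℂ} {k : ℕ}
    (hr : r ∈ ringInt d) (hs : s ∈ ringInt d) (hcop : CoprimeIn d r s)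
    (hr' : r' ∈ ringInt d) (hs' : s' ∈ ringInt d) (hcop' : CoprimeIn d r' s')
    (h : divC r s = divC r' s') (hasc : AscentAt a n r s k) : AscentAt a n r' s' k := by
  obtain ⟨ε, hε, rfl, rfl⟩ := exists_norm_eq_one_of_divC_eq hr hs hcop hr' hs' hcop' h
  have hscale : ∀ j, ‖cfCross a (ε * r) (ε * s) j‖ = ‖cfCross a r s j‖ := fun j => by
    rw [show cfCross a (ε * r) (ε * s) j = ε * cfCross a r s j by unfold cfCross; ring,
      norm_mul, hε, one_mul]
  simpa only [AscentAt, hscale] using hasc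

lemma AscentAt.succ_of_norm_mul_sub_mul_eq_one (hmem : ∀ k, 1 ≤ k → k ≤ n → a k ∈ ringInt d)
    (hbig : ∀ k, 1 ≤ k → k ≤ n → 3 ≤ ‖a k‖) {p₁ q₁ p₂ q₂ : ℂ}
    (hp₁ : p₁ ∈ ringInt d) (hq₁ : q₁ ∈ ringInt d) (hp₂ : p₂ ∈ ringInt d) (hq₂ : q₂ ∈ ringInt d)
    (hdet : ‖p₁ * q₂ - p₂ * q₁‖ = 1) {k : ℕ} (hasc : AscentAt a n p₁ q₁ k) :
    AscentAt a n p₂ q₂ (k + 1) := by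
  intro hk
  by_contra! hlt
  have hAB := hasc (by omega)
  have hcross := (norm_cfCross_mul_sub a p₁ q₁ p₂ q₂ k).trans hdet
  set B := cfCross a p₁ q₁ (k + 1)
  set D := cfCross a p₂ q₂ (k + 1)
  have hDC : 2 * ‖D‖ < ‖cfCross a p₂ q₂ k‖ := by
    have := sub_one_mul_norm_lt_of_eq_mul_add (cfCross_add_two a p₂ q₂ k) hlt
    nlinarith [hbig (k + 1) (by omega) hk, norm_nonneg D]
  have hD : 1 ≤ ‖D‖ := one_le_norm_of_mem_ringInt (cfCross_mem hmem hp₂ hq₂ (by omega))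
    (norm_pos_iff.mp ((norm_nonneg _).trans_lt hlt))
  rcases eq_or_ne B 0 with hB | hB
  · rw [hB, norm_zero, norm_le_zero_iff] at hAB
    simp [hAB, hB] at hcross
  · have hB' := one_le_norm_of_mem_ringInt (cfCross_mem hmem hp₁ hq₁ (by omega)) hB
    exact (one_lt_norm_mul_sub_mul hB' hD hAB hDC).ne' hcross

lemma ascentAt_of_isWalk (hmem : ∀ k, 1 ≤ k → k ≤ n → a k ∈ ringInt d)
    (hbig : ∀ k, 1 ≤ k → k ≤ n → 3 ≤ ‖a k‖) {m : ℕ} {g : ℕ → OnePoint ℂ} (hg : IsWalk d m g)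
    (h0 : g 0 = cfWalk a 0) {k : ℕ} (hk : k ≤ m) {r s : ℂ} (hr : r ∈ ringInt d)
    (hs : s ∈ ringInt d) (hcop : CoprimeIn d r s) (hx : g k = divC r s) :
    AscentAt a n r s k := by
  induction k generalizing r s with
  | zero =>
    rw [h0, cfWalk_eq_divC] at hx
    have hs0 : s = 0 := by simpa [cfWalkNum, cfWalkDen] using mul_eq_mul_of_divC_eq hx
    intro
    rw [show cfCross a r s 0 = 0 by simp [cfCross, cfWalkNum, cfWalkDen, hs0], norm_zero]
    exact norm_nonneg _
  | succ k ih =>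
    obtain ⟨p₁, q₁, p₂, q₂, hp₁, hq₁, hp₂, hq₂, hc₁, hc₂, hx₁, hx₂, hdet⟩ := hg k (by omega)
    exact ((ih (by omega) hp₁ hq₁ hc₁ hx₁).succ_of_norm_mul_sub_mul_eq_one hmem hbig
      hp₁ hq₁ hp₂ hq₂ hdet).of_divC_eq hp₂ hq₂ hc₂ hr hs hcop (hx₂.symm.trans hx)

lemma norm_cfCross_end_lt (hbig : ∀ k, 1 ≤ k → k ≤ n → 2 ≤ ‖a k‖) {j : ℕ} (hj : j ≤ n) :
    ‖cfCross a (cfWalkNum a (n + 1)) (cfWalkDen a (n + 1)) (j + 1)‖ <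
      ‖cfCross a (cfWalkNum a (n + 1)) (cfWalkDen a (n + 1)) j‖ := by
  induction hj using Nat.decreasingInduction with
  | self =>
    have h : cfCross a (cfWalkNum a (n + 1)) (cfWalkDen a (n + 1)) n = (-1) ^ (n + 1) := by
      rw [cfCross, ← cfWalkNum_mul_cfWalkDen_sub]; ring
    have h' : cfCross a (cfWalkNum a (n + 1)) (cfWalkDen a (n + 1)) (n + 1) = 0 := by
      rw [cfCross]; ring
    rw [h, h', norm_zero, norm_pow, norm_neg, norm_one, one_pow]
    exact one_pos
  | of_succ k hk ih =>
    have := sub_one_mul_norm_lt_of_eq_mul_add (cfCross_add_two a _ _ k) ih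
    nlinarith [hbig (k + 1) (by omega) hk,
      norm_nonneg (cfCross a (cfWalkNum a (n + 1)) (cfWalkDen a (n + 1)) (k + 1))]

end LargeDigits

theorem large_digits_imply_geodesic_general (d : ℕ) (n : ℕ) (a : ℕ → ℂ)
    (ha : ∀ k, 1 ≤ k → k ≤ n →
      a k ∈ ringInt d ∧ (4.17209 : ℝ) ≤ ‖a k‖) :
    IsGeodesicWalk d (n + 1) (cfWalk a) := by
  have hmem : ∀ k, 1 ≤ k → k ≤ n → a k ∈ ringInt d := fun k h₁ h₂ => (ha k h₁ h₂).1
  have hbig : ∀ k, 1 ≤ k → k ≤ n → 3 ≤ ‖a k‖ := fun k h₁ h₂ => by linarith [(ha k h₁ h₂).2]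
  refine ⟨isWalk_cfWalk hmem, fun m g hg h0 hm => ?_⟩
  obtain ⟨hN, hD⟩ := cfWalkNum_mem_and_cfWalkDen_mem hmem (le_refl (n + 1))
  have hasc := ascentAt_of_isWalk hmem hbig hg h0 le_rfl hN hD
    (coprimeIn_cfWalkNum_cfWalkDen hmem le_rfl) (hm.trans (cfWalk_eq_divC a _))
  by_contra! hlt
  exact (norm_cfCross_end_lt (fun k h₁ h₂ => by linarith [hbig k h₁ h₂]) (by omega : m ≤ n)).not_ge
    (hasc (by omega))

/-- Let `d ∈ {1,2,3,7,11}` and let `x = [a₁,…,a_n]` be a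
continued fraction expansion with `a_ℓ ∈ ℤ[ω_d]` and `|a_ℓ| ≥ 4.17209` for all
`ℓ`. Then this expansion is geodesic: the walk
`∞ → 0 = p₀/q₀ → p₁/q₁ → ⋯ → p_n/q_n = x` along its convergents is a geodesic
path in the Farey graph `E_d` from `∞` to `x`. -/
theorem large_digits_imply_geodesic (d : ℕ) (hd : d ∈ ({1, 2, 3, 7, 11} : Set ℕ))
    (n : ℕ) (hn : 1 ≤ n) (a : ℕ → ℂ)
    (ha : ∀ k, 1 ≤ k → k ≤ n →
      a k ∈ ringInt d ∧ (4.17209 : ℝ) ≤ ‖a k‖) :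
    IsGeodesicWalk d (n + 1) (cfWalk a) :=
  large_digits_imply_geodesic_general d n a ha
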